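/- Any closed curve in the unit sphere S² of length less than 2π is contained in an open hemisphere. -/

import Mathlib

open Set

/-- The angular (intrinsic) distance between two unit vectors in ℝ³. -/
noncomputable def angDist (u v : EuclideanSpace ℝ (Fin 3)) : ℝ :=
  Real.arccos (inner ℝ u v : ℝ)

namespace HornAux

abbrev E3 := EuclideanSpace ℝ (Fin 3)

lemma inner_abs_le_one {x y : E3} (hx : ‖x‖ = 1) (hy : ‖y‖ = 1) :
    |(inner ℝ x y : ℝ)| ≤ 1 := by
  have h := abs_real_inner_le_norm x y
  rw [hx, hy] at h; simpa using h

lemma angDist_nonneg (x y : E3) : 0 ≤ angDist x y := Real.arccos_nonneg _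

lemma angDist_le_pi (x y : E3) : angDist x y ≤ Real.pi := Real.arccos_le_pi _

lemma angDist_comm (x y : E3) : angDist x y = angDist y x := by
  unfold angDist; rw [real_inner_comm]

lemma angDist_self {x : E3} (hx : ‖x‖ = 1) : angDist x x = 0 := by
  unfold angDist
  rw [real_inner_self_eq_norm_sq, hx]
  norm_num

lemma arccos_le_arccos {x y : ℝ} (h : x ≤ y) : Real.arccos y ≤ Real.arccos x := by
  unfold Real.arccos
  have := Real.monotone_arcsin h
  linarith

lemma angDist_triangle {x y z : E3} (hx : ‖x‖ = 1) (hy : ‖y‖ = 1) (hz : ‖z‖ = 1) :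
    angDist x z ≤ angDist x y + angDist y z := by
  by_cases hab : Real.pi ≤ angDist x y + angDist y z
  · exact le_trans (angDist_le_pi x z) hab
  push_neg at hab
  have ha0 := angDist_nonneg x y
  have hb0 := angDist_nonneg y z
  have hc1 := abs_le.mp (inner_abs_le_one hx hy)
  have hd1 := abs_le.mp (inner_abs_le_one hy hz)
  have hcos : Real.cos (angDist x y + angDist y z)
      = (inner ℝ x y : ℝ) * (inner ℝ y z : ℝ)
        - Real.sqrt (1 - (inner ℝ x y : ℝ) ^ 2) * Real.sqrt (1 - (inner ℝ y z : ℝ) ^ 2) := by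
    rw [Real.cos_add]
    unfold angDist
    rw [Real.cos_arccos hc1.1 hc1.2, Real.cos_arccos hd1.1 hd1.2,
      Real.sin_arccos, Real.sin_arccos]
  have hiy : (inner ℝ y y : ℝ) = 1 := by
    rw [real_inner_self_eq_norm_sq, hy]; norm_num
  have hkey : (inner ℝ x y : ℝ) * (inner ℝ y z : ℝ)
      - Real.sqrt (1 - (inner ℝ x y : ℝ) ^ 2) * Real.sqrt (1 - (inner ℝ y z : ℝ) ^ 2)
      ≤ (inner ℝ x z : ℝ) := by
    have hxz' : (inner ℝ (x - (inner ℝ x y : ℝ) • y) (z - (inner ℝ y z : ℝ) • y) : ℝ)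
        = (inner ℝ x z : ℝ) - (inner ℝ x y : ℝ) * (inner ℝ y z : ℝ) := by
      simp only [inner_sub_left, inner_sub_right, real_inner_smul_left,
        real_inner_smul_right, hiy]
      rw [real_inner_comm z y]
      ring
    have hnx' : ‖x - (inner ℝ x y : ℝ) • y‖ ^ 2 = 1 - (inner ℝ x y : ℝ) ^ 2 := by
      rw [← real_inner_self_eq_norm_sq]
      simp only [inner_sub_left, inner_sub_right, real_inner_smul_left,
        real_inner_smul_right, hiy]
      rw [real_inner_comm y x, real_inner_self_eq_norm_sq, hx]
      ring
    have hnz' : ‖z - (inner ℝ y z : ℝ) • y‖ ^ 2 = 1 - (inner ℝ y z : ℝ) ^ 2 := by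
      rw [← real_inner_self_eq_norm_sq]
      simp only [inner_sub_left, inner_sub_right, real_inner_smul_left,
        real_inner_smul_right, hiy]
      rw [real_inner_comm z y, real_inner_self_eq_norm_sq, hz]
      ring
    have hCS := abs_real_inner_le_norm (x - (inner ℝ x y : ℝ) • y) (z - (inner ℝ y z : ℝ) • y)
    rw [hxz'] at hCS
    have h1 : ‖x - (inner ℝ x y : ℝ) • y‖ = Real.sqrt (1 - (inner ℝ x y : ℝ) ^ 2) := by
      rw [← hnx']; exact (Real.sqrt_sq (norm_nonneg _)).symm
    have h2 : ‖z - (inner ℝ y z : ℝ) • y‖ = Real.sqrt (1 - (inner ℝ y z : ℝ) ^ 2) := by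
      rw [← hnz']; exact (Real.sqrt_sq (norm_nonneg _)).symm
    rw [h1, h2] at hCS
    have := (abs_le.mp hCS).1
    linarith
  have hge : Real.cos (angDist x y + angDist y z) ≤ (inner ℝ x z : ℝ) := by
    rw [hcos]; exact hkey
  calc angDist x z = Real.arccos (inner ℝ x z : ℝ) := rfl
    _ ≤ Real.arccos (Real.cos (angDist x y + angDist y z)) := arccos_le_arccos hge
    _ = angDist x y + angDist y z := Real.arccos_cos (by linarith) (le_of_lt hab)

/-- partition sum -/
noncomputable def psum (γ : ℝ → E3) (n : ℕ) (u : ℕ → ℝ) : ℝ :=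
  ∑ i ∈ Finset.range n, angDist (γ (u i)) (γ (u (i + 1)))

/-- the set of partition sums over `[a,b]` -/
def sums (γ : ℝ → E3) (a b : ℝ) : Set ℝ :=
  {S | ∃ n : ℕ, ∃ u : ℕ → ℝ, Monotone u ∧ u 0 = a ∧ (∀ i, n ≤ i → u i = b) ∧
      (∀ i, u i ∈ Icc a b) ∧ S = psum γ n u}

noncomputable def clen (γ : ℝ → E3) (a b : ℝ) : ℝ := sSup (sums γ a b)

lemma mem_sums_single (γ : ℝ → E3) {a b : ℝ} (hab : a ≤ b) :
    angDist (γ a) (γ b) ∈ sums γ a b := by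
  refine ⟨1, fun i => if i = 0 then a else b, ?_, by simp, ?_, ?_, ?_⟩
  · apply monotone_nat_of_le_succ
    intro i
    rcases Nat.eq_zero_or_pos i with h | h
    · simp [h, hab]
    · simp [Nat.pos_iff_ne_zero.mp h]
  · intro i hi; simp [Nat.one_le_iff_ne_zero.mp hi]
  · intro i; by_cases h : i = 0 <;> simp [h, hab, le_refl]
  · simp [psum]

lemma sums_nonempty (γ : ℝ → E3) {a b : ℝ} (hab : a ≤ b) : (sums γ a b).Nonempty :=
  ⟨_, mem_sums_single γ hab⟩

lemma sums_nonneg (γ : ℝ → E3) {a b : ℝ} {S : ℝ} (hS : S ∈ sums γ a b) : 0 ≤ S := by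
  obtain ⟨n, u, _, _, _, _, rfl⟩ := hS
  exact Finset.sum_nonneg fun i _ => angDist_nonneg _ _

lemma angDist_le_clen (γ : ℝ → E3) {a b : ℝ} (hab : a ≤ b)
    (hbdd : BddAbove (sums γ a b)) : angDist (γ a) (γ b) ≤ clen γ a b :=
  le_csSup hbdd (mem_sums_single γ hab)

lemma clen_nonneg (γ : ℝ → E3) {a b : ℝ} (hab : a ≤ b)
    (hbdd : BddAbove (sums γ a b)) : 0 ≤ clen γ a b :=
  le_trans (angDist_nonneg _ _) (angDist_le_clen γ hab hbdd)

lemma clen_le (γ : ℝ → E3) {a b C : ℝ} (hab : a ≤ b)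
    (hC : ∀ S ∈ sums γ a b, S ≤ C) : clen γ a b ≤ C :=
  csSup_le (sums_nonempty γ hab) hC

lemma clen_self (γ : ℝ → E3) {a : ℝ} (ha : ‖γ a‖ = 1) : clen γ a a = 0 := by
  have h1 : ∀ S ∈ sums γ a a, S ≤ 0 := by
    rintro S ⟨n, u, _, _, _, hIcc, rfl⟩
    have hu : ∀ i, u i = a := fun i => le_antisymm (hIcc i).2 (hIcc i).1
    have : psum γ n u = 0 := by
      unfold psum
      apply Finset.sum_eq_zero
      intro i _
      rw [hu i, hu (i + 1), angDist_self ha]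
    simp [this]
  have h2 : (0:ℝ) ≤ clen γ a a := by
    have := angDist_le_clen γ (le_refl a) ⟨0, fun S hS => h1 S hS⟩
    calc (0:ℝ) = angDist (γ a) (γ a) := (angDist_self ha).symm
      _ ≤ clen γ a a := this
  exact le_antisymm (clen_le γ (le_refl a) h1) h2

/-- concatenation of partitions -/
lemma mem_sums_concat (γ : ℝ → E3) {a b c S1 S2 : ℝ}
    (h1 : S1 ∈ sums γ a b) (h2 : S2 ∈ sums γ b c) : S1 + S2 ∈ sums γ a c := by
  obtain ⟨n1, u1, hm1, h01, hb1, hI1, rfl⟩ := h1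
  obtain ⟨n2, u2, hm2, h02, hb2, hI2, rfl⟩ := h2
  have hab : a ≤ b := by rw [← h01]; exact (hI1 0).2
  have hbc : b ≤ c := by rw [← h02]; exact (hI2 0).2
  refine ⟨n1 + n2, fun i => if i < n1 then u1 i else u2 (i - n1), ?_, ?_, ?_, ?_, ?_⟩
  · apply monotone_nat_of_le_succ
    intro i
    by_cases hi : i + 1 < n1
    · simp [hi, Nat.lt_of_succ_lt hi, hm1 (Nat.le_succ i)]
    · by_cases hi' : i < n1
      · simp only [hi, hi', if_true, if_false]
        exact le_trans (hI1 i).2 ((hI2 _).1)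
      · simp only [hi, hi', if_false]
        have : i + 1 - n1 = (i - n1) + 1 := by omega
        rw [this]
        exact hm2 (Nat.le_succ _)
  · by_cases h : 0 < n1
    · simp [h, h01]
    · have hn1 : n1 = 0 := by omega
      have : a = b := by rw [← h01, hb1 0 (by omega)]
      simp [hn1, h02, this]
  · intro i hi
    have : ¬ i < n1 := by omega
    simp only [this, if_false]
    exact hb2 _ (by omega)
  · intro i
    by_cases h : i < n1
    · simp only [h, if_true]
      exact ⟨(hI1 i).1, (hI1 i).2.trans hbc⟩
    · simp only [h, if_false]
      exact ⟨hab.trans (hI2 _).1, (hI2 _).2⟩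
  · unfold psum
    rw [← Finset.sum_range_add_sum_Ico _ (Nat.le_add_right n1 n2),
      Finset.sum_Ico_eq_sum_range]
    congr 1
    · apply Finset.sum_congr rfl
      intro i hi
      have hi' : i < n1 := Finset.mem_range.mp hi
      by_cases h : i + 1 < n1
      · simp [hi', h]
      · have : i + 1 = n1 := by omega
        simp [hi', h, this, h02, hb1 n1 (le_refl n1)]
    · have : n1 + n2 - n1 = n2 := by omega
      rw [this]
      apply Finset.sum_congr rfl
      intro i _
      have h1' : ¬ n1 + i < n1 := by omega
      have h2' : ¬ n1 + i + 1 < n1 := by omega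
      simp only [h1', h2', if_false]
      have e1 : n1 + i - n1 = i := by omega
      have e2 : n1 + i + 1 - n1 = i + 1 := by omega
      rw [e1, e2]

lemma clen_concat_le (γ : ℝ → E3) {a b c : ℝ} (hab : a ≤ b) (hbc : b ≤ c)
    (hbdd : BddAbove (sums γ a c)) :
    clen γ a b + clen γ b c ≤ clen γ a c := by
  rw [← sub_nonneg]
  have h : clen γ a b ≤ clen γ a c - clen γ b c := by
    apply clen_le γ hab
    intro S1 hS1
    rw [le_sub_iff_add_le, add_comm]
    rw [← le_sub_iff_add_le]
    apply clen_le γ hbc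
    intro S2 hS2
    rw [le_sub_iff_add_le, add_comm]
    exact le_csSup hbdd (mem_sums_concat γ hS1 hS2)
  linarith

/-- Splitting a partition sum at an intermediate point `b`. -/
lemma psum_split (γ : ℝ → E3) {a b c : ℝ} (hab : a ≤ b) (hbc : b ≤ c)
    (hunit : ∀ s ∈ Icc a c, ‖γ s‖ = 1)
    {S : ℝ} (hS : S ∈ sums γ a c)
    (hb1 : BddAbove (sums γ a b)) (hb2 : BddAbove (sums γ b c)) :
    S ≤ clen γ a b + clen γ b c := by
  obtain ⟨n, u, hm, h0, hn, hI, rfl⟩ := hS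
  have hmem1 : psum γ n (fun i => min (u i) b) ∈ sums γ a b := by
    refine ⟨n, _, fun i j hij => min_le_min (hm hij) le_rfl, ?_, ?_, ?_, rfl⟩
    · simp [h0, hab]
    · intro i hi; simp [hn i hi, hbc]
    · intro i; exact ⟨le_min (hI i).1 hab, min_le_right _ _⟩
  have hmem2 : psum γ n (fun i => max (u i) b) ∈ sums γ b c := by
    refine ⟨n, _, fun i j hij => max_le_max (hm hij) le_rfl, ?_, ?_, ?_, rfl⟩
    · simp [h0, hab]
    · intro i hi; simp [hn i hi, hbc]
    · intro i; exact ⟨le_max_right _ _, max_le (hI i).2 hbc⟩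
  have hterm : ∀ i ∈ Finset.range n,
      angDist (γ (u i)) (γ (u (i + 1)))
      ≤ angDist (γ (min (u i) b)) (γ (min (u (i + 1)) b))
        + angDist (γ (max (u i) b)) (γ (max (u (i + 1)) b)) := by
    intro i _
    have h1 := hI i
    have h2 := hI (i + 1)
    have hu : u i ≤ u (i + 1) := hm (Nat.le_succ i)
    have hgb : ‖γ b‖ = 1 := hunit b ⟨hab, hbc⟩
    rcases le_total (u (i + 1)) b with h | h
    · rw [min_eq_left (hu.trans h), min_eq_left h, max_eq_right (hu.trans h),
        max_eq_right h, angDist_self hgb]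
      simp
    · rcases le_total b (u i) with h' | h'
      · rw [min_eq_right h', min_eq_right (h'.trans hu), max_eq_left h',
          max_eq_left (h'.trans hu), angDist_self hgb]
        simp
      · rw [min_eq_left h', min_eq_right h, max_eq_right h', max_eq_left h]
        exact angDist_triangle (hunit _ ⟨h1.1, h1.2⟩) hgb (hunit _ ⟨h2.1, h2.2⟩)
  calc psum γ n u ≤ psum γ n (fun i => min (u i) b) + psum γ n (fun i => max (u i) b) := by
        unfold psum; rw [← Finset.sum_add_distrib]; exact Finset.sum_le_sum hterm
    _ ≤ clen γ a b + clen γ b c := add_le_add (le_csSup hb1 hmem1) (le_csSup hb2 hmem2)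

lemma clen_split (γ : ℝ → E3) {a b c : ℝ} (hab : a ≤ b) (hbc : b ≤ c)
    (hunit : ∀ s ∈ Icc a c, ‖γ s‖ = 1)
    (hb1 : BddAbove (sums γ a b)) (hb2 : BddAbove (sums γ b c)) :
    clen γ a c ≤ clen γ a b + clen γ b c :=
  clen_le γ (hab.trans hbc) fun _ hS => psum_split γ hab hbc hunit hS hb1 hb2

/-- A monotone two-valued partition sum is at most one step. -/
lemma psum_two_value (γ : ℝ → E3) {v w : ℝ} (hvw : v ≤ w)
    (hv : ‖γ v‖ = 1) (hw : ‖γ w‖ = 1) (n : ℕ) {u : ℕ → ℝ} (hm : Monotone u)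
    (hval : ∀ i, u i = v ∨ u i = w) :
    psum γ n u ≤ angDist (γ v) (γ w) := by
  have hD : 0 ≤ angDist (γ v) (γ w) := angDist_nonneg _ _
  have hterm : ∀ i, angDist (γ (u i)) (γ (u (i + 1)))
      ≤ if u i = v ∧ u (i + 1) = w ∧ v ≠ w then angDist (γ v) (γ w) else 0 := by
    intro i
    rcases hval i with h1 | h1 <;> rcases hval (i + 1) with h2 | h2
    · rw [h1, h2, angDist_self hv]
      split <;> simp [hD]
    · by_cases hne : v = w
      · rw [h1, h2, ← hne, angDist_self hv]
        split <;> simp [hD]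
      · simp [h1, h2, hne]
    · -- u i = w, u (i+1) = v : monotone forces v = w
      have : w ≤ v := by rw [← h1, ← h2]; exact hm (Nat.le_succ i)
      have hvw' : v = w := le_antisymm hvw this
      rw [h1, h2, hvw', angDist_self (hvw' ▸ hv)]
      split <;> simp [hD]
    · rw [h1, h2, angDist_self hw]
      split <;> simp [hD]
  calc psum γ n u
      ≤ ∑ i ∈ Finset.range n,
          (if u i = v ∧ u (i + 1) = w ∧ v ≠ w then angDist (γ v) (γ w) else 0) :=
        Finset.sum_le_sum fun i _ => hterm i
    _ ≤ angDist (γ v) (γ w) := by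
        rw [← Finset.sum_filter, Finset.sum_const, nsmul_eq_mul]
        have hcard : ((Finset.range n).filter
            (fun i => u i = v ∧ u (i + 1) = w ∧ v ≠ w)).card ≤ 1 := by
          rw [Finset.card_le_one]
          intro i hi j hj
          simp only [Finset.mem_filter] at hi hj
          by_contra hne
          rcases Nat.lt_or_ge i j with h | h
          · have hwv : w ≤ v := by
              rw [← hi.2.2.1, ← hj.2.1]; exact hm h
            exact hi.2.2.2 (le_antisymm hvw hwv)
          · have h' : j < i := by omega
            have hwv : w ≤ v := by
              rw [← hj.2.2.1, ← hi.2.1]; exact hm h'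
            exact hi.2.2.2 (le_antisymm hvw hwv)
        calc (((Finset.range n).filter
              (fun i => u i = v ∧ u (i + 1) = w ∧ v ≠ w)).card : ℝ)
              * angDist (γ v) (γ w)
            ≤ 1 * angDist (γ v) (γ w) := by
              apply mul_le_mul_of_nonneg_right _ hD
              exact_mod_cast hcard
          _ = angDist (γ v) (γ w) := one_mul _

lemma psum_clip (γ : ℝ → E3) {a b c : ℝ} (hab : a ≤ b) (hbc : b ≤ c)
    (hunit : ∀ s ∈ Icc a c, ‖γ s‖ = 1) (n : ℕ) {u : ℕ → ℝ} (hm : Monotone u)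
    (hI : ∀ i, u i ∈ Icc a c) :
    psum γ n u ≤ psum γ n (fun i => min (u i) b) + psum γ n (fun i => max (u i) b) := by
  unfold psum
  rw [← Finset.sum_add_distrib]
  apply Finset.sum_le_sum
  intro i _
  dsimp only
  have h1 := hI i
  have h2 := hI (i + 1)
  have hu : u i ≤ u (i + 1) := hm (Nat.le_succ i)
  have hgb : ‖γ b‖ = 1 := hunit b ⟨hab, hbc⟩
  rcases le_total (u (i + 1)) b with h | h
  · rw [min_eq_left (hu.trans h), min_eq_left h, max_eq_right (hu.trans h),
      max_eq_right h, angDist_self hgb]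
    simp
  · rcases le_total b (u i) with h' | h'
    · rw [min_eq_right h', min_eq_right (h'.trans hu), max_eq_left h',
        max_eq_left (h'.trans hu), angDist_self hgb]
      simp
    · rw [min_eq_left h', min_eq_right h, max_eq_right h', max_eq_left h]
      exact angDist_triangle (hunit _ ⟨h1.1, h1.2⟩) hgb (hunit _ ⟨h2.1, h2.2⟩)
/-- Near a point `t0`, the angular distance to `γ t0` is small. -/
lemma small_angDist (γ : ℝ → E3) (hunit : ∀ s ∈ Icc (0:ℝ) 1, ‖γ s‖ = 1)
    (hcont : ContinuousOn γ (Icc (0:ℝ) 1)) {t0 : ℝ} (ht0 : t0 ∈ Icc (0:ℝ) 1)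
    {ε : ℝ} (hε : 0 < ε) :
    ∃ δ > 0, ∀ s ∈ Icc (0:ℝ) 1, |s - t0| < δ → angDist (γ s) (γ t0) < ε := by
  have hg : ContinuousOn (fun s => angDist (γ s) (γ t0)) (Icc (0:ℝ) 1) := by
    apply Real.continuous_arccos.comp_continuousOn
    exact hcont.inner continuousOn_const
  have htend := (hg t0 ht0).tendsto
  have h0 : angDist (γ t0) (γ t0) = 0 := angDist_self (hunit t0 ht0)
  rw [h0] at htend
  have hevent : ∀ᶠ s in nhdsWithin t0 (Icc (0:ℝ) 1),
      angDist (γ s) (γ t0) < ε :=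
    htend.eventually_lt_const hε
  rw [Filter.eventually_iff, Metric.mem_nhdsWithin_iff] at hevent
  obtain ⟨δ, hδ, h⟩ := hevent
  refine ⟨δ, hδ, fun s hs hd => h ⟨?_, hs⟩⟩
  simpa [Metric.mem_ball, Real.dist_eq] using hd


lemma approx_left (γ : ℝ → E3) {L : ℝ}
    (hunit : ∀ s ∈ Icc (0:ℝ) 1, ‖γ s‖ = 1)
    (hcont : ContinuousOn γ (Icc (0:ℝ) 1))
    (hB : ∀ a b : ℝ, 0 ≤ a → b ≤ 1 → ∀ S ∈ sums γ a b, S ≤ L)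
    {t0 : ℝ} (ht0 : 0 < t0) (ht1 : t0 ≤ 1) {ε : ℝ} (hε : 0 < ε) :
    ∃ v, 0 ≤ v ∧ v < t0 ∧ clen γ 0 t0 ≤ clen γ 0 v + ε := by
  have ht0I : t0 ∈ Icc (0:ℝ) 1 := ⟨le_of_lt ht0, ht1⟩
  obtain ⟨δ, hδ, hsmall⟩ := small_angDist γ hunit hcont ht0I (half_pos hε)
  -- take an almost maximal partition sum
  have hne : (sums γ 0 t0).Nonempty := sums_nonempty γ (le_of_lt ht0)
  have hlt : clen γ 0 t0 - ε / 2 < sSup (sums γ 0 t0) :=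
    sub_lt_self _ (half_pos hε)
  obtain ⟨S, hS, hS'⟩ := exists_lt_of_lt_csSup hne hlt
  obtain ⟨n, u, hm, h0, hn, hI, rfl⟩ := hS
  -- the largest partition point below t0
  have hex : ∃ i, ¬ u i < t0 := ⟨n, by rw [hn n le_rfl]; exact lt_irrefl _⟩
  classical
  set m := Nat.find hex with hm'
  have hm0 : 0 < m := by
    rcases Nat.eq_zero_or_pos m with h | h
    · exfalso; have := Nat.find_spec hex; rw [← hm', h, h0] at this; exact this ht0
    · exact h
  have hlow : ∀ i, u i < t0 → u i ≤ u (m - 1) := by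
    intro i hi
    have him : i < m := by
      by_contra hgt
      push_neg at hgt
      have h1 : ¬ u m < t0 := Nat.find_spec hex
      exact absurd hi (not_lt.mpr (le_trans (not_lt.mp h1) (hm hgt)))
    exact hm (by omega)
  have hum : u (m - 1) < t0 := by
    have := Nat.find_min hex (show m - 1 < m by omega)
    exact not_not.mp this
  set v := max (u (m - 1)) (t0 - δ / 2) with hv
  have hum0 : (0:ℝ) ≤ u (m - 1) := by rw [← h0]; exact hm (Nat.zero_le _)
  have hv0 : (0:ℝ) ≤ v := le_trans hum0 (le_max_left _ _)
  have hvt : v < t0 := max_lt hum (by linarith)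
  have hv1 : v ≤ 1 := le_trans (le_of_lt hvt) ht1
  have hdist : |v - t0| < δ := by
    rw [abs_sub_lt_iff]
    constructor
    · linarith
    · have : t0 - δ / 2 ≤ v := le_max_right _ _
      linarith
  have hsmallv : angDist (γ v) (γ t0) < ε / 2 := hsmall v ⟨hv0, hv1⟩ hdist
  -- clip the partition at v
  have hIcc01 : Icc (0:ℝ) t0 ⊆ Icc (0:ℝ) 1 := Icc_subset_Icc le_rfl ht1
  have hclip := psum_clip γ hv0 (le_of_lt hvt)
    (fun s hs => hunit s (hIcc01 hs)) n hm hI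
  have hminmem : psum γ n (fun i => min (u i) v) ∈ sums γ 0 v := by
    refine ⟨n, _, fun i j hij => min_le_min (hm hij) le_rfl, ?_, ?_, ?_, rfl⟩
    · simp [h0, hv0]
    · intro i hi; simp [hn i hi, le_of_lt hvt]
    · intro i; exact ⟨le_min (hI i).1 hv0, min_le_right _ _⟩
  have hbdd0v : BddAbove (sums γ 0 v) := ⟨L, fun S hS => hB 0 v le_rfl hv1 S hS⟩
  have hminle : psum γ n (fun i => min (u i) v) ≤ clen γ 0 v := le_csSup hbdd0v hminmem
  have hmaxle : psum γ n (fun i => max (u i) v) ≤ angDist (γ v) (γ t0) := by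
    apply psum_two_value γ (le_of_lt hvt) (hunit v ⟨hv0, hv1⟩) (hunit t0 ht0I) n
      (fun i j hij => max_le_max (hm hij) le_rfl)
    intro i
    rcases le_or_gt (u i) v with h | h
    · left; exact max_eq_right h
    · right
      have hnot : ¬ u i < t0 := fun hlt =>
        absurd (le_trans (hlow i hlt) (le_max_left _ _)) (not_le.mpr h)
      have : u i = t0 := le_antisymm (hI i).2 (not_lt.mp hnot)
      rw [max_eq_left (le_of_lt h), this]
  have : clen γ 0 t0 ≤ clen γ 0 v + angDist (γ v) (γ t0) + ε / 2 := by linarith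
  exact ⟨v, hv0, hvt, by linarith⟩

lemma approx_right (γ : ℝ → E3) {L : ℝ}
    (hunit : ∀ s ∈ Icc (0:ℝ) 1, ‖γ s‖ = 1)
    (hcont : ContinuousOn γ (Icc (0:ℝ) 1))
    (hB : ∀ a b : ℝ, 0 ≤ a → b ≤ 1 → ∀ S ∈ sums γ a b, S ≤ L)
    {t0 : ℝ} (ht0 : 0 ≤ t0) (ht1 : t0 < 1) {ε : ℝ} (hε : 0 < ε) :
    ∃ v, v ≤ 1 ∧ t0 < v ∧ clen γ t0 1 ≤ clen γ v 1 + ε := by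
  have ht0I : t0 ∈ Icc (0:ℝ) 1 := ⟨ht0, le_of_lt ht1⟩
  obtain ⟨δ, hδ, hsmall⟩ := small_angDist γ hunit hcont ht0I (half_pos hε)
  have hne : (sums γ t0 1).Nonempty := sums_nonempty γ (le_of_lt ht1)
  have hlt : clen γ t0 1 - ε / 2 < sSup (sums γ t0 1) := sub_lt_self _ (half_pos hε)
  obtain ⟨S, hS, hS'⟩ := exists_lt_of_lt_csSup hne hlt
  obtain ⟨n, u, hm, h0, hn, hI, rfl⟩ := hS
  have hex : ∃ i, t0 < u i := ⟨n, by rw [hn n le_rfl]; exact ht1⟩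
  classical
  set m := Nat.find hex with hm'
  have hm0 : 0 < m := by
    rcases Nat.eq_zero_or_pos m with h | h
    · exfalso
      have := Nat.find_spec hex
      rw [← hm', h, h0] at this
      exact lt_irrefl _ this
    · exact h
  have hum : t0 < u m := Nat.find_spec hex
  have hlow : ∀ i, t0 < u i → u m ≤ u i := by
    intro i hi
    apply hm
    by_contra hgt
    push_neg at hgt
    exact absurd hi (Nat.find_min hex hgt)
  set v := min (u m) (t0 + δ / 2) with hv
  have hum1 : u m ≤ 1 := (hI m).2
  have hvt : t0 < v := lt_min hum (by linarith)
  have hv1 : v ≤ 1 := le_trans (min_le_left _ _) hum1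
  have hv0 : (0:ℝ) ≤ v := le_trans ht0 (le_of_lt hvt)
  have hdist : |v - t0| < δ := by
    rw [abs_sub_lt_iff]
    constructor
    · have : v ≤ t0 + δ / 2 := min_le_right _ _
      linarith
    · linarith
  have hsmallv : angDist (γ v) (γ t0) < ε / 2 := hsmall v ⟨hv0, hv1⟩ hdist
  have hIcc01 : Icc t0 (1:ℝ) ⊆ Icc (0:ℝ) 1 := Icc_subset_Icc ht0 le_rfl
  have hclip := psum_clip γ (le_of_lt hvt) hv1
    (fun s hs => hunit s (hIcc01 hs)) n hm hI
  have hmaxmem : psum γ n (fun i => max (u i) v) ∈ sums γ v 1 := by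
    refine ⟨n, _, fun i j hij => max_le_max (hm hij) le_rfl, ?_, ?_, ?_, rfl⟩
    · simp [h0, le_of_lt hvt]
    · intro i hi; simp [hn i hi, hv1]
    · intro i; exact ⟨le_max_right _ _, max_le (hI i).2 hv1⟩
  have hbddv1 : BddAbove (sums γ v 1) := ⟨L, fun S hS => hB v 1 hv0 le_rfl S hS⟩
  have hmaxle : psum γ n (fun i => max (u i) v) ≤ clen γ v 1 := le_csSup hbddv1 hmaxmem
  have hminle : psum γ n (fun i => min (u i) v) ≤ angDist (γ t0) (γ v) := by
    apply psum_two_value γ (le_of_lt hvt) (hunit t0 ht0I) (hunit v ⟨hv0, hv1⟩) n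
      (fun i j hij => min_le_min (hm hij) le_rfl)
    intro i
    rcases le_or_gt (u i) t0 with h | h
    · left
      have : u i = t0 := le_antisymm h (hI i).1
      rw [this, min_eq_left (le_of_lt hvt)]
    · right
      exact min_eq_right (le_trans (min_le_left _ _) (hlow i h))
  have hcomm : angDist (γ t0) (γ v) = angDist (γ v) (γ t0) := angDist_comm _ _
  exact ⟨v, hv1, hvt, by linarith⟩

end HornAux

open HornAux

/-- Any closed curve in the unit sphere `S²` of (intrinsic) length less than `2π` lies in
an open hemisphere: the length hypothesis says every partition sum of angular distances
is at most `L` for some `L < 2π`. -/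
theorem stmt_18 (γ : ℝ → EuclideanSpace ℝ (Fin 3))
    (hsph : ∀ t ∈ Icc (0:ℝ) 1, ‖γ t‖ = 1)
    (hcont : ContinuousOn γ (Icc (0:ℝ) 1))
    (hclosed : γ 0 = γ 1)
    (L : ℝ) (hL : L < 2 * Real.pi)
    (hlen : ∀ (n : ℕ) (u : ℕ → ℝ), Monotone u → (∀ i, u i ∈ Icc (0:ℝ) 1) →
      ∑ i ∈ Finset.range n, angDist (γ (u i)) (γ (u (i + 1))) ≤ L) :
    ∃ zc : EuclideanSpace ℝ (Fin 3), ‖zc‖ = 1 ∧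
      ∀ t ∈ Icc (0:ℝ) 1, angDist (γ t) zc < Real.pi / 2 := by
  classical
  have hB : ∀ a b : ℝ, 0 ≤ a → b ≤ 1 → ∀ S ∈ sums γ a b, S ≤ L := by
    rintro a b ha hb S ⟨n, u, hm, h0, hn, hI, rfl⟩
    exact hlen n u hm fun i => ⟨le_trans ha (hI i).1, le_trans (hI i).2 hb⟩
  have hbdd : ∀ a b : ℝ, 0 ≤ a → b ≤ 1 → BddAbove (sums γ a b) :=
    fun a b ha hb => ⟨L, fun S hS => hB a b ha hb S hS⟩
  have hL0 : 0 ≤ L := by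
    have := hlen 0 (fun _ => 0) monotone_const (fun i => ⟨le_rfl, zero_le_one⟩)
    simpa using this
  have hg0 : ‖γ 0‖ = 1 := hsph 0 ⟨le_rfl, zero_le_one⟩
  set A := {t : ℝ | t ∈ Icc (0:ℝ) 1 ∧ clen γ 0 t ≤ L / 2} with hA
  have h0A : (0:ℝ) ∈ A := ⟨⟨le_rfl, zero_le_one⟩, by rw [clen_self γ hg0]; linarith⟩
  have hbddA : BddAbove A := ⟨1, fun t ht => ht.1.2⟩
  set T := sSup A with hT
  have hT0 : 0 ≤ T := le_csSup hbddA h0A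
  have hT1 : T ≤ 1 := csSup_le ⟨0, h0A⟩ fun t ht => ht.1.2
  have hTI : T ∈ Icc (0:ℝ) 1 := ⟨hT0, hT1⟩
  have hπ2 : L / 2 < Real.pi := by linarith
  set ε := (Real.pi - L / 2) / 2 with hε
  have hεpos : 0 < ε := by rw [hε]; linarith
  -- the two halves have length < π
  have hleft : clen γ 0 T < Real.pi := by
    rcases eq_or_lt_of_le hT0 with h | h
    · rw [← h, clen_self γ hg0]; exact Real.pi_pos
    · obtain ⟨v, hv0, hvT, hcl⟩ := approx_left γ hsph hcont hB h hT1 hεpos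
      obtain ⟨s, hsA, hvs⟩ := exists_lt_of_lt_csSup ⟨0, h0A⟩ hvT
      have hsle : clen γ 0 v ≤ clen γ 0 s := by
        have h1 := clen_concat_le γ hv0 (le_of_lt hvs) (hbdd 0 s le_rfl hsA.1.2)
        have h2 := clen_nonneg γ (le_of_lt hvs)
          (hbdd v s hv0 hsA.1.2)
        linarith
      have hs2 := hsA.2
      calc clen γ 0 T ≤ clen γ 0 v + ε := hcl
        _ ≤ L / 2 + ε := by linarith
        _ < Real.pi := by rw [hε]; linarith
  have hright : clen γ T 1 < Real.pi := by
    rcases eq_or_lt_of_le hT1 with h | h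
    · rw [h, clen_self γ (hsph 1 ⟨zero_le_one, le_rfl⟩)]; exact Real.pi_pos
    · obtain ⟨v, hv1, hTv, hcl⟩ := approx_right γ hsph hcont hB hT0 h hεpos
      have hv0 : (0:ℝ) ≤ v := le_trans hT0 (le_of_lt hTv)
      have hvnotA : v ∉ A := fun hvA => absurd (le_csSup hbddA hvA) (not_le.mpr hTv)
      have hclv : L / 2 < clen γ 0 v := by
        by_contra hle
        push_neg at hle
        exact hvnotA ⟨⟨hv0, hv1⟩, hle⟩
      have hsum : clen γ 0 v + clen γ v 1 ≤ clen γ 0 1 :=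
        clen_concat_le γ hv0 hv1 (hbdd 0 1 le_rfl le_rfl)
      have htot : clen γ 0 1 ≤ L := clen_le γ zero_le_one (hB 0 1 le_rfl le_rfl)
      calc clen γ T 1 ≤ clen γ v 1 + ε := hcl
        _ ≤ L / 2 + ε := by linarith
        _ < Real.pi := by rw [hε]; linarith
  -- the midpoint direction
  have hp : ‖γ 0‖ = 1 := hg0
  have hq : ‖γ T‖ = 1 := hsph T hTI
  have hdpq : angDist (γ 0) (γ T) ≤ clen γ 0 T :=
    angDist_le_clen γ hT0 (hbdd 0 T le_rfl hT1)
  have hpq : (-1:ℝ) < (inner ℝ (γ 0) (γ T) : ℝ) := by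
    by_contra h
    push_neg at h
    have h1 : (inner ℝ (γ 0) (γ T) : ℝ) = -1 :=
      le_antisymm h (abs_le.mp (inner_abs_le_one hp hq)).1
    have h2 : angDist (γ 0) (γ T) = Real.pi := by
      unfold angDist; rw [h1]; exact Real.arccos_neg_one
    linarith
  have hw2 : ‖γ 0 + γ T‖ ^ 2 = 2 + 2 * (inner ℝ (γ 0) (γ T) : ℝ) := by
    rw [norm_add_sq_real, hp, hq]; ring
  have hwpos : 0 < ‖γ 0 + γ T‖ := by
    have h2 : 0 < ‖γ 0 + γ T‖ ^ 2 := by rw [hw2]; linarith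
    by_contra hle
    push_neg at hle
    have : ‖γ 0 + γ T‖ = 0 := le_antisymm hle (norm_nonneg _)
    rw [this] at h2; norm_num at h2
  set z : E3 := ‖γ 0 + γ T‖⁻¹ • (γ 0 + γ T) with hzdef
  have hz : ‖z‖ = 1 := by
    rw [hzdef, norm_smul, norm_inv, norm_norm]
    field_simp
  have hip : (inner ℝ (γ 0) (γ 0 + γ T) : ℝ) = 1 + (inner ℝ (γ 0) (γ T) : ℝ) := by
    rw [inner_add_right, real_inner_self_eq_norm_sq, hp]; norm_num
  have hiq : (inner ℝ (γ T) (γ 0 + γ T) : ℝ) = 1 + (inner ℝ (γ 0) (γ T) : ℝ) := by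
    rw [inner_add_right, real_inner_self_eq_norm_sq, hq, real_inner_comm (γ T) (γ 0)]
    ring
  have hpz : 0 < (inner ℝ (γ 0) z : ℝ) := by
    rw [hzdef, real_inner_smul_right, hip]
    exact mul_pos (inv_pos.mpr hwpos) (by linarith)
  have hqz : 0 < (inner ℝ (γ T) z : ℝ) := by
    rw [hzdef, real_inner_smul_right, hiq]
    exact mul_pos (inv_pos.mpr hwpos) (by linarith)
  -- reflection identity
  have hrefl : ∀ s ∈ Icc (0:ℝ) 1, (inner ℝ (γ s) z : ℝ) = 0 →
      angDist (γ 0) (γ s) + angDist (γ s) (γ T) = Real.pi := by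
    intro s hs hsz
    have hrw : (inner ℝ (γ s) (γ 0 + γ T) : ℝ) = 0 := by
      rw [hzdef, real_inner_smul_right] at hsz
      rcases mul_eq_zero.mp hsz with h | h
      · exact absurd h (ne_of_gt (inv_pos.mpr hwpos))
      · exact h
    have hneg : (inner ℝ (γ s) (γ T) : ℝ) = -(inner ℝ (γ s) (γ 0) : ℝ) := by
      rw [inner_add_right] at hrw
      linarith
    have h1 : angDist (γ s) (γ T) = Real.pi - Real.arccos (inner ℝ (γ s) (γ 0) : ℝ) := by
      unfold angDist
      rw [hneg, Real.arccos_neg]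
    have h2 : angDist (γ 0) (γ s) = Real.arccos (inner ℝ (γ s) (γ 0) : ℝ) := by
      unfold angDist
      rw [real_inner_comm]
    rw [h1, h2]
    ring
  -- positivity of the inner product along the curve
  have hpos : ∀ t ∈ Icc (0:ℝ) 1, 0 < (inner ℝ (γ t) z : ℝ) := by
    by_contra hcon
    push_neg at hcon
    obtain ⟨t1, ht1, ht1z⟩ := hcon
    have hφ : ContinuousOn (fun s => (inner ℝ (γ s) z : ℝ)) (Icc (0:ℝ) 1) :=
      hcont.inner continuousOn_const
    rcases le_total t1 T with hcase | hcase
    · have hsub : Icc (0:ℝ) t1 ⊆ Icc 0 1 := Icc_subset_Icc le_rfl ht1.2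
      have hIVT := intermediate_value_Icc' ht1.1 (hφ.mono hsub)
      have h0mem : (0:ℝ) ∈ Icc ((inner ℝ (γ t1) z : ℝ)) ((inner ℝ (γ 0) z : ℝ)) :=
        ⟨ht1z, le_of_lt hpz⟩
      obtain ⟨s, hs, hφs⟩ := hIVT h0mem
      have hsI : s ∈ Icc (0:ℝ) 1 := hsub hs
      have hπ := hrefl s hsI hφs
      have hd1 : angDist (γ 0) (γ s) ≤ clen γ 0 s :=
        angDist_le_clen γ hs.1 (hbdd 0 s le_rfl hsI.2)
      have hd2 : angDist (γ s) (γ T) ≤ clen γ s T :=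
        angDist_le_clen γ (hs.2.trans hcase) (hbdd s T hs.1 hT1)
      have hcc : clen γ 0 s + clen γ s T ≤ clen γ 0 T :=
        clen_concat_le γ hs.1 (hs.2.trans hcase) (hbdd 0 T le_rfl hT1)
      linarith
    · have hsub : Icc T t1 ⊆ Icc (0:ℝ) 1 := Icc_subset_Icc hT0 ht1.2
      have hIVT := intermediate_value_Icc' hcase (hφ.mono hsub)
      have h0mem : (0:ℝ) ∈ Icc ((inner ℝ (γ t1) z : ℝ)) ((inner ℝ (γ T) z : ℝ)) :=
        ⟨ht1z, le_of_lt hqz⟩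
      obtain ⟨s, hs, hφs⟩ := hIVT h0mem
      have hsI : s ∈ Icc (0:ℝ) 1 := hsub hs
      have hπ := hrefl s hsI hφs
      have hd1 : angDist (γ T) (γ s) ≤ clen γ T s :=
        angDist_le_clen γ hs.1 (hbdd T s hT0 hsI.2)
      have hd2 : angDist (γ s) (γ 1) ≤ clen γ s 1 :=
        angDist_le_clen γ hsI.2 (hbdd s 1 hsI.1 le_rfl)
      have hcc : clen γ T s + clen γ s 1 ≤ clen γ T 1 :=
        clen_concat_le γ hs.1 hsI.2 (hbdd T 1 hT0 le_rfl)
      have he1 : angDist (γ T) (γ s) = angDist (γ s) (γ T) := angDist_comm _ _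
      have he2 : angDist (γ s) (γ 1) = angDist (γ 0) (γ s) := by
        rw [← hclosed, angDist_comm]
      linarith
  refine ⟨z, hz, fun t ht => ?_⟩
  have := hpos t ht
  unfold angDist
  exact Real.arccos_lt_pi_div_two.mpr this
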